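/- Let n ≥ 0 and let E, F be disjoint nonempty compact subsets of ℂ, both infinite. Then the minimal value τ_n of Problem Z4 satisfies 0 < τ_n ≤ 1. -/

import Mathlib

open Polynomial Set

open scoped Classical in
/-- The sign function relative to `E` and `F`: equal to `-1` on `E` and `+1` elsewhere
(in particular `+1` on `F`). -/
noncomputable def signEF (E : Set ℂ) (z : ℂ) : ℂ := if z ∈ E then -1 else 1

/-- The minimal value `τ_n(E,F)` of the fourth Zolotarev problem (the sign problem):
the infimum of `sup_{z ∈ E ∪ F} |p(z)/q(z) - sign_{E/F}(z)|` over all pairs of complex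
polynomials `p, q` of degree at most `n` such that `q` has no zeros in `E ∪ F`. -/
noncomputable def zoloTau (n : ℕ) (E F : Set ℂ) : ℝ :=
  sInf {t : ℝ | ∃ p q : Polynomial ℂ, p.degree ≤ n ∧ q.degree ≤ n ∧
    (∀ z ∈ E ∪ F, q.eval z ≠ 0) ∧
    t = sSup ((fun z => ‖p.eval z / q.eval z - signEF E z‖) '' (E ∪ F))}

/-!
Fix `n + 1` nodes `s ⊆ E` and `t ⊆ F`. If `p / q` approximates the sign with error `T`, then
`|p + q| ≤ T |q|` on `E` and `|p - q| ≤ T |q|` on `F`. Let `M` be the largest value of `|q|` on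
`s ∪ t`. Both `p + q` and `p - q` have degree `≤ n`, so Lagrange interpolation on `s`, resp. `t`,
bounds `|p + q|` on `t` and `|p - q|` on `s` by `C T M`, where `C` bounds the Lebesgue function
of `s` on `t` and that of `t` on `s`. At a node `w` with `|q(w)| = M`,
`2 q(w) = (p + q)(w) - (p - q)(w)` then gives `T ≥ 2 / (C + 1)`, a bound independent of `p, q`.
The pair `p = 0`, `q = 1` has error exactly `1`.
-/

section Lagrange

variable {𝕜 : Type*} [NormedField 𝕜] [DecidableEq 𝕜]

noncomputable def lebesgueFunction (s : Finset 𝕜) (z : 𝕜) : ℝ :=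
  ∑ i ∈ s, ‖(Lagrange.basis s id i).eval z‖

lemma lebesgueFunction_nonneg (s : Finset 𝕜) (z : 𝕜) : 0 ≤ lebesgueFunction s z :=
  Finset.sum_nonneg fun _ _ => norm_nonneg _

lemma norm_eval_le_lebesgueFunction_mul {s : Finset 𝕜} {f : 𝕜[X]} (hf : f.degree < s.card)
    {B : ℝ} (hB : ∀ i ∈ s, ‖f.eval i‖ ≤ B) (z : 𝕜) :
    ‖f.eval z‖ ≤ lebesgueFunction s z * B := by
  rw [Lagrange.eq_interpolate (injOn_id _) hf, Lagrange.interpolate_apply, eval_finsetSum,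
    lebesgueFunction, Finset.sum_mul]
  refine (norm_sum_le _ _).trans (Finset.sum_le_sum fun i hi => ?_)
  rw [eval_mul, eval_C, norm_mul, mul_comm]
  exact mul_le_mul_of_nonneg_left (hB i hi) (norm_nonneg _)

lemma exists_lebesgueFunction_le (s t : Finset 𝕜) :
    ∃ C, 0 ≤ C ∧ (∀ z ∈ t, lebesgueFunction s z ≤ C) ∧ ∀ z ∈ s, lebesgueFunction t z ≤ C := by
  have hs := Finset.sum_nonneg fun z (_ : z ∈ t) => lebesgueFunction_nonneg s z
  have ht := Finset.sum_nonneg fun z (_ : z ∈ s) => lebesgueFunction_nonneg t z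
  refine ⟨∑ z ∈ t, lebesgueFunction s z + ∑ z ∈ s, lebesgueFunction t z, add_nonneg hs ht,
    fun z hz => ?_, fun z hz => ?_⟩
  · linarith [Finset.single_le_sum (fun z _ => lebesgueFunction_nonneg s z) hz]
  · linarith [Finset.single_le_sum (fun z _ => lebesgueFunction_nonneg t z) hz]

end Lagrange

section TwoNodeSets

variable {𝕜 : Type*} [RCLike 𝕜] [DecidableEq 𝕜]

lemma two_le_mul_of_norm_eval_add_le_of_norm_eval_sub_le {s t : Finset 𝕜}
    (hst : (s ∪ t).Nonempty) {p q : 𝕜[X]} (hadd : (p + q).degree < s.card)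
    (hsub : (p - q).degree < t.card) (hq : ∀ z ∈ s ∪ t, q.eval z ≠ 0) {C T : ℝ}
    (hCs : ∀ z ∈ t, lebesgueFunction s z ≤ C) (hCt : ∀ z ∈ s, lebesgueFunction t z ≤ C)
    (hs : ∀ z ∈ s, ‖(p + q).eval z‖ ≤ T * ‖q.eval z‖)
    (ht : ∀ z ∈ t, ‖(p - q).eval z‖ ≤ T * ‖q.eval z‖) :
    2 ≤ (C + 1) * T := by
  obtain ⟨w, hw, hwmax⟩ := (s ∪ t).exists_max_image (fun z => ‖q.eval z‖) hst
  set M := ‖q.eval w‖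
  have hM : 0 < M := norm_pos_iff.2 (hq w hw)
  have hT : 0 ≤ T := by
    refine nonneg_of_mul_nonneg_left ?_ hM
    rcases Finset.mem_union.1 hw with hws | hwt
    exacts [(norm_nonneg _).trans (hs w hws), (norm_nonneg _).trans (ht w hwt)]
  have hsM : ∀ z ∈ s, ‖(p + q).eval z‖ ≤ T * M := fun z hz =>
    (hs z hz).trans (mul_le_mul_of_nonneg_left (hwmax z (Finset.mem_union_left _ hz)) hT)
  have htM : ∀ z ∈ t, ‖(p - q).eval z‖ ≤ T * M := fun z hz =>
    (ht z hz).trans (mul_le_mul_of_nonneg_left (hwmax z (Finset.mem_union_right _ hz)) hT)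
  have hTM : 0 ≤ T * M := mul_nonneg hT hM.le
  have hw_bound : ‖(p + q).eval w‖ + ‖(p - q).eval w‖ ≤ (C + 1) * (T * M) := by
    rcases Finset.mem_union.1 hw with hws | hwt
    · have := (norm_eval_le_lebesgueFunction_mul hsub htM w).trans
        (mul_le_mul_of_nonneg_right (hCt w hws) hTM)
      linarith [hsM w hws]
    · have := (norm_eval_le_lebesgueFunction_mul hadd hsM w).trans
        (mul_le_mul_of_nonneg_right (hCs w hwt) hTM)
      linarith [htM w hwt]
  have h2M : 2 * M ≤ (C + 1) * T * M :=
    calc 2 * M = ‖(p + q).eval w - (p - q).eval w‖ := by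
          rw [eval_add, eval_sub, add_sub_sub_cancel, ← two_mul, norm_mul, RCLike.norm_two]
      _ ≤ ‖(p + q).eval w‖ + ‖(p - q).eval w‖ := norm_sub_le _ _
      _ ≤ (C + 1) * T * M := by rw [mul_assoc]; exact hw_bound
  exact le_of_mul_le_mul_right h2M hM

end TwoNodeSets

lemma norm_signEF (E : Set ℂ) (z : ℂ) : ‖signEF E z‖ = 1 := by
  unfold signEF; split <;> simp

lemma eval_add_eq_of_mem {E : Set ℂ} {z : ℂ} (hz : z ∈ E) {p q : ℂ[X]} (hq : q.eval z ≠ 0) :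
    (p + q).eval z = (p.eval z / q.eval z - signEF E z) * q.eval z := by
  rw [eval_add, signEF, if_pos hz]
  field_simp
  ring

lemma eval_sub_eq_of_notMem {E : Set ℂ} {z : ℂ} (hz : z ∉ E) {p q : ℂ[X]} (hq : q.eval z ≠ 0) :
    (p - q).eval z = (p.eval z / q.eval z - signEF E z) * q.eval z := by
  rw [eval_sub, signEF, if_neg hz]
  field_simp

lemma bddAbove_norm_div_sub_signEF {K : Set ℂ} (hK : IsCompact K) {p q : ℂ[X]}
    (hq : ∀ z ∈ K, q.eval z ≠ 0) (E : Set ℂ) :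
    BddAbove ((fun z => ‖p.eval z / q.eval z - signEF E z‖) '' K) := by
  obtain ⟨B, hB⟩ := hK.exists_bound_of_continuousOn (f := fun z => p.eval z / q.eval z)
    (p.continuous.continuousOn.div q.continuous.continuousOn hq)
  refine ⟨B + 1, forall_mem_image.2 fun z hz => ?_⟩
  calc ‖p.eval z / q.eval z - signEF E z‖ ≤ ‖p.eval z / q.eval z‖ + ‖signEF E z‖ :=
        norm_sub_le _ _
    _ ≤ B + 1 := by rw [norm_signEF]; linarith [hB z hz]

lemma sSup_norm_zero_div_one_sub_signEF {K : Set ℂ} (hK : K.Nonempty) (E : Set ℂ) :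
    sSup ((fun z => ‖(0 : ℂ[X]).eval z / (1 : ℂ[X]).eval z - signEF E z‖) '' K) = 1 := by
  simp only [eval_zero, eval_one, zero_div, zero_sub, norm_neg, norm_signEF]
  rw [hK.image_const, csSup_singleton]

lemma two_div_le_sSup_norm_div_sub_signEF {n : ℕ} {E F : Set ℂ} (hK : IsCompact (E ∪ F))
    (hdisj : Disjoint E F) {s t : Finset ℂ} (hsE : ↑s ⊆ E) (htF : ↑t ⊆ F)
    (hs : s.card = n + 1) (ht : t.card = n + 1) {C : ℝ} (hC0 : 0 ≤ C)
    (hCs : ∀ z ∈ t, lebesgueFunction s z ≤ C) (hCt : ∀ z ∈ s, lebesgueFunction t z ≤ C)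
    {p q : ℂ[X]} (hp : p.degree ≤ n) (hq : q.degree ≤ n) (hq0 : ∀ z ∈ E ∪ F, q.eval z ≠ 0) :
    2 / (C + 1) ≤ sSup ((fun z => ‖p.eval z / q.eval z - signEF E z‖) '' (E ∪ F)) := by
  set T := sSup ((fun z => ‖p.eval z / q.eval z - signEF E z‖) '' (E ∪ F))
  have hT : ∀ z ∈ E ∪ F, ‖p.eval z / q.eval z - signEF E z‖ ≤ T := fun z hz =>
    le_csSup (bddAbove_norm_div_sub_signEF hK hq0 E) (mem_image_of_mem _ hz)
  have hdeg : ∀ r : ℂ[X], r.degree ≤ n → r.degree < (n + 1 : ℕ) := fun r hr =>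
    hr.trans_lt (by exact_mod_cast n.lt_succ_self)
  have hst : ∀ z ∈ s ∪ t, z ∈ E ∪ F := fun z hz =>
    union_subset_union hsE htF (by simpa using hz)
  rw [div_le_iff₀ (by linarith), mul_comm]
  refine two_le_mul_of_norm_eval_add_le_of_norm_eval_sub_le
    ((Finset.card_pos.1 (by omega)).mono Finset.subset_union_left)
    (hs ▸ hdeg _ ((degree_add_le p q).trans (max_le hp hq)))
    (ht ▸ hdeg _ ((degree_sub_le p q).trans (max_le hp hq)))
    (fun z hz => hq0 z (hst z hz)) hCs hCt (fun z hz => ?_) (fun z hz => ?_)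
  · rw [eval_add_eq_of_mem (hsE hz) (hq0 z (Or.inl (hsE hz))), norm_mul]
    exact mul_le_mul_of_nonneg_right (hT z (Or.inl (hsE hz))) (norm_nonneg _)
  · rw [eval_sub_eq_of_notMem (disjoint_right.1 hdisj (htF hz)) (hq0 z (Or.inr (htF hz))),
      norm_mul]
    exact mul_le_mul_of_nonneg_right (hT z (Or.inr (htF hz))) (norm_nonneg _)

lemma sInf_pos_and_le_of_mem {S : Set ℝ} {a c : ℝ} (ha : a ∈ S) (hc : 0 < c)
    (hS : ∀ x ∈ S, c ≤ x) : 0 < sInf S ∧ sInf S ≤ a :=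
  ⟨hc.trans_le (le_csInf ⟨a, ha⟩ hS), csInf_le ⟨c, hS⟩ ha⟩

theorem zoloTau_pos_le_one_general (n : ℕ) (E F : Set ℂ)
    (hE : IsCompact E) (hF : IsCompact F)
    (hEinf : E.Infinite) (hFinf : F.Infinite)
    (hdisj : Disjoint E F) :
    0 < zoloTau n E F ∧ zoloTau n E F ≤ 1 := by
  obtain ⟨s, hsE, hs⟩ := hEinf.exists_subset_card_eq (n + 1)
  obtain ⟨t, htF, ht⟩ := hFinf.exists_subset_card_eq (n + 1)
  obtain ⟨C, hC0, hCs, hCt⟩ := exists_lebesgueFunction_le s t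
  refine sInf_pos_and_le_of_mem ⟨0, 1, by simp, by simp, by simp, ?_⟩
    (by positivity : 0 < 2 / (C + 1)) ?_
  · exact (sSup_norm_zero_div_one_sub_signEF (hEinf.nonempty.mono subset_union_left) E).symm
  · rintro _ ⟨p, q, hp, hq, hq0, rfl⟩
    exact two_div_le_sSup_norm_div_sub_signEF (hE.union hF) hdisj hsE htF hs ht hC0 hCs hCt
      hp hq hq0

/-- The minimal value `τ_n` of the fourth Zolotarev problem satisfies `0 < τ_n ≤ 1`. -/
theorem zoloTau_pos_le_one (n : ℕ) (E F : Set ℂ)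
    (hE : IsCompact E) (hF : IsCompact F)
    (hEne : E.Nonempty) (hFne : F.Nonempty)
    (hEinf : E.Infinite) (hFinf : F.Infinite)
    (hdisj : Disjoint E F) :
    0 < zoloTau n E F ∧ zoloTau n E F ≤ 1 :=
  zoloTau_pos_le_one_general n E F hE hF hEinf hFinf hdisj
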